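/- Fix b ≥ 1, let 𝒰 be a non-principal ultrafilter on the set ℙ of primes, let R = ∏_{p∈ℙ} ℤ/p^bℤ / 𝒰, and let π ∈ R be the class of the sequence (p mod p^b)_{p∈ℙ}. Then for every c ∈ R and every 0 ≤ i ≤ b−1, the map x ↦ π^{b−1}x + π^i c induces a well-defined bijection from the quotient R/πR onto the set {z ∈ R : πz = π^{i+1}c}. -/
import Mathlib

open FirstOrder Filter

/-- The congruence on the product ring identifying two sequences when they agree
on a set in the ultrafilter `𝒰`. -/
def ultraRingCon {I : Type*} (𝒰 : Ultrafilter I) (R : I → Type*) [∀ i, CommRing (R i)] :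
    RingCon (∀ i, R i) where
  r f g := ∀ᶠ i in (𝒰 : Filter I), f i = g i
  iseqv :=
    ⟨fun _ => Eventually.of_forall fun _ => rfl,
     fun h => h.mono fun _ e => e.symm,
     fun h₁ h₂ => h₂.mp (h₁.mono fun _ e₁ e₂ => e₁.trans e₂)⟩
  mul' := fun h₁ h₂ => h₂.mp (h₁.mono fun i e₁ e₂ => by
    simp only [Pi.mul_apply, e₁, e₂])
  add' := fun h₁ h₂ => h₂.mp (h₁.mono fun i e₁ e₂ => by
    simp only [Pi.add_apply, e₁, e₂])

/-- The ultraproduct `∏_{i ∈ I} R i / 𝒰` of the family of rings `R`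
with respect to the ultrafilter `𝒰`. -/
def UltraProd {I : Type*} (𝒰 : Ultrafilter I) (R : I → Type*) [∀ i, CommRing (R i)] : Type _ :=
  (ultraRingCon 𝒰 R).Quotient

instance {I : Type*} (𝒰 : Ultrafilter I) (R : I → Type*) [∀ i, CommRing (R i)] :
    CommRing (UltraProd 𝒰 R) :=
  inferInstanceAs (CommRing (ultraRingCon 𝒰 R).Quotient)

/-- The class of a sequence in the ultraproduct. -/
def UltraProd.mk {I : Type*} (𝒰 : Ultrafilter I) (R : I → Type*) [∀ i, CommRing (R i)]
    (f : ∀ i, R i) : UltraProd 𝒰 R :=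
  (ultraRingCon 𝒰 R).mk' f

lemma UltraProd.mk_eq_mk {I : Type*} (𝒰 : Ultrafilter I) (R : I → Type*) [∀ i, CommRing (R i)]
    (f g : ∀ i, R i) :
    UltraProd.mk 𝒰 R f = UltraProd.mk 𝒰 R g ↔ ∀ᶠ i in (𝒰 : Filter I), f i = g i :=
  RingCon.eq _

lemma UltraProd.mk_surjective {I : Type*} (𝒰 : Ultrafilter I) (R : I → Type*)
    [∀ i, CommRing (R i)] (z : UltraProd 𝒰 R) : ∃ f, z = UltraProd.mk 𝒰 R f := by
  obtain ⟨f, hf⟩ := Quot.exists_rep z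
  exact ⟨f, hf.symm⟩

lemma zmod_factor (n a d : ℕ) (hn : n = a * d) (ha : a ≠ 0) (hd : d ≠ 0) (w : ZMod n) :
    (a : ZMod n) * w = 0 ↔ ∃ u : ZMod n, w = (d : ZMod n) * u := by
  subst hn
  haveI : NeZero (a * d) := ⟨mul_ne_zero ha hd⟩
  constructor
  · intro h
    have hw : ((w.val : ℕ) : ZMod (a * d)) = w := ZMod.natCast_val w |>.trans (ZMod.cast_id _ _)
    rw [← hw, ← Nat.cast_mul, ZMod.natCast_eq_zero_iff] at h
    have hdvd : d ∣ w.val := by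
      rcases h with ⟨k, hk⟩
      refine ⟨k, ?_⟩
      have ha' : 0 < a := Nat.pos_of_ne_zero ha
      nlinarith [Nat.eq_of_mul_eq_mul_left ha' (by linarith [hk] : a * w.val = a * (d * k))]
    rcases hdvd with ⟨k, hk⟩
    exact ⟨(k : ZMod (a*d)), by rw [← hw, hk, Nat.cast_mul]⟩
  · rintro ⟨u, rfl⟩
    rw [← mul_assoc, ← Nat.cast_mul, ZMod.natCast_self, zero_mul]

/-- Fix `b ≥ 1`, let `𝒰` be a non-principal ultrafilter on the set `ℙ` of primes, let
`R = ∏_{p ∈ ℙ} ℤ/p^bℤ / 𝒰`, and let `π ∈ R` be the class of the sequence `(p mod p^b)_p`.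
Then for every `c ∈ R` and every `0 ≤ i ≤ b - 1`, the map `x ↦ π^(b-1) x + π^i c` induces a
well-defined bijection from `R/πR` onto `{z ∈ R : π z = π^(i+1) c}`. -/
theorem ultraproduct_coordinatising_bijection (b : ℕ) (hb : 1 ≤ b)
    (𝒰 : Ultrafilter {p : ℕ // p.Prime})
    (hfree : ∀ p : {p : ℕ // p.Prime}, 𝒰 ≠ pure p)
    (π : UltraProd 𝒰 fun p : {p : ℕ // p.Prime} => ZMod (p.1 ^ b))
    (hπ : π = UltraProd.mk 𝒰 _ fun p : {p : ℕ // p.Prime} => (p.1 : ZMod (p.1 ^ b)))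
    (c : UltraProd 𝒰 fun p : {p : ℕ // p.Prime} => ZMod (p.1 ^ b))
    (i : ℕ) (hi : i ≤ b - 1) :
    ∃ F : ((UltraProd 𝒰 fun p : {p : ℕ // p.Prime} => ZMod (p.1 ^ b)) ⧸
        Ideal.span {π}) →
      {z : UltraProd 𝒰 fun p : {p : ℕ // p.Prime} => ZMod (p.1 ^ b) |
        π * z = π ^ (i + 1) * c},
      Function.Bijective F ∧
      ∀ x : UltraProd 𝒰 fun p : {p : ℕ // p.Prime} => ZMod (p.1 ^ b),
        (F (Ideal.Quotient.mk (Ideal.span {π}) x) : UltraProd 𝒰 fun p : {p : ℕ // p.Prime} =>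
          ZMod (p.1 ^ b)) = π ^ (b - 1) * x + π ^ i * c := by
  classical
  set Rf : {p : ℕ // p.Prime} → Type := fun p => ZMod (p.1 ^ b) with hRf
  have hb1 : (b - 1) + 1 = b := Nat.succ_pred_eq_of_pos hb
  -- basic algebra of mk
  have hmul : ∀ f g : ∀ p, Rf p, UltraProd.mk 𝒰 Rf f * UltraProd.mk 𝒰 Rf g
      = UltraProd.mk 𝒰 Rf (fun p => f p * g p) := fun f g => (map_mul _ f g).symm
  have hpow : ∀ (f : ∀ p, Rf p) (k : ℕ), (UltraProd.mk 𝒰 Rf f) ^ k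
      = UltraProd.mk 𝒰 Rf (fun p => f p ^ k) := fun f k => (map_pow _ f k).symm
  have hzero : (0 : UltraProd 𝒰 Rf) = UltraProd.mk 𝒰 Rf 0 := (map_zero _).symm
  -- component facts
  have hane : ∀ (p : {p : ℕ // p.Prime}) (k : ℕ), (p.1 : ℕ) ^ k ≠ 0 :=
    fun p k => pow_ne_zero _ p.2.pos.ne'
  have hfac1 : ∀ p : {p : ℕ // p.Prime}, (p.1 : ℕ) ^ b = p.1 * p.1 ^ (b - 1) := by
    intro p; rw [← pow_succ']; rw [hb1]
  have hfac2 : ∀ p : {p : ℕ // p.Prime}, (p.1 : ℕ) ^ b = p.1 ^ (b - 1) * p.1 := by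
    intro p; rw [← pow_succ]; rw [hb1]
  -- π ^ b = 0
  have hπb : π ^ b = 0 := by
    rw [hπ, hpow, hzero, UltraProd.mk_eq_mk]
    refine Eventually.of_forall fun p => ?_
    show (p.1 : ZMod (p.1 ^ b)) ^ b = 0
    rw [← Nat.cast_pow, ZMod.natCast_self]
  have e1 : π * π ^ (b - 1) = π ^ b := by rw [← pow_succ', hb1]
  have e2 : π * π ^ i = π ^ (i + 1) := (pow_succ' π i).symm
  -- annihilator facts
  have key1 : ∀ z : UltraProd 𝒰 Rf, π * z = 0 → ∃ t, z = π ^ (b - 1) * t := by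
    intro z hz
    obtain ⟨g, rfl⟩ := UltraProd.mk_surjective 𝒰 Rf z
    rw [hπ, hmul, hzero, UltraProd.mk_eq_mk] at hz
    set u : ∀ p, Rf p := fun p =>
      if h : ∃ u : ZMod (p.1 ^ b), g p = ((p.1 : ℕ) ^ (b - 1) : ZMod (p.1 ^ b)) * u
      then h.choose else 0 with hu
    refine ⟨UltraProd.mk 𝒰 Rf u, ?_⟩
    rw [hπ, hpow, hmul, UltraProd.mk_eq_mk]
    refine hz.mono fun p hp => ?_
    have hex : ∃ v : ZMod (p.1 ^ b), g p = ((p.1 : ℕ) ^ (b - 1) : ZMod (p.1 ^ b)) * v := by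
      have := (zmod_factor (p.1 ^ b) p.1 (p.1 ^ (b - 1)) (hfac1 p) p.2.pos.ne' (hane p _)
        (g p)).mp hp
      simpa using this
    have := hex.choose_spec
    show g p = (p.1 : ZMod (p.1 ^ b)) ^ (b - 1) * u p
    rw [hu]
    simp only [dif_pos hex]
    exact this
  have key2 : ∀ z : UltraProd 𝒰 Rf, π ^ (b - 1) * z = 0 → ∃ t, z = π * t := by
    intro z hz
    obtain ⟨g, rfl⟩ := UltraProd.mk_surjective 𝒰 Rf z
    rw [hπ, hpow, hmul, hzero, UltraProd.mk_eq_mk] at hz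
    set u : ∀ p, Rf p := fun p =>
      if h : ∃ u : ZMod (p.1 ^ b), g p = ((p.1 : ℕ) : ZMod (p.1 ^ b)) * u
      then h.choose else 0 with hu
    refine ⟨UltraProd.mk 𝒰 Rf u, ?_⟩
    rw [hπ, hmul, UltraProd.mk_eq_mk]
    refine hz.mono fun p hp => ?_
    have hp' : ((p.1 ^ (b - 1) : ℕ) : ZMod (p.1 ^ b)) * g p = 0 := by
      push_cast
      simpa using hp
    have hex : ∃ v : ZMod (p.1 ^ b), g p = ((p.1 : ℕ) : ZMod (p.1 ^ b)) * v :=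
      (zmod_factor (p.1 ^ b) (p.1 ^ (b - 1)) p.1 (hfac2 p) (hane p _) p.2.pos.ne'
        (g p)).mp hp'
    have := hex.choose_spec
    show g p = (p.1 : ZMod (p.1 ^ b)) * u p
    rw [hu]
    simp only [dif_pos hex]
    exact this
  -- the map
  set G : UltraProd 𝒰 Rf → UltraProd 𝒰 Rf := fun x => π ^ (b - 1) * x + π ^ i * c with hG
  have hGmem : ∀ x, π * G x = π ^ (i + 1) * c := by
    intro x
    have : π * G x = (π * π ^ (b - 1)) * x + (π * π ^ i) * c := by rw [hG]; ring
    rw [this, e1, e2, hπb, zero_mul, zero_add]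
  have hwd : ∀ x y : UltraProd 𝒰 Rf, x - y ∈ Ideal.span {π} → G x = G y := by
    intro x y hxy
    obtain ⟨t, ht⟩ := Ideal.mem_span_singleton.mp hxy
    have : π ^ (b - 1) * x - π ^ (b - 1) * y = π ^ (b - 1) * (x - y) := by ring
    have h0 : π ^ (b - 1) * x - π ^ (b - 1) * y = 0 := by
      rw [this, ht, show π ^ (b - 1) * (π * t) = (π * π ^ (b - 1)) * t by ring, e1, hπb,
        zero_mul]
    have := sub_eq_zero.mp h0
    simp only [hG]
    rw [this]
  set Fset : UltraProd 𝒰 Rf →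
      {z : UltraProd 𝒰 Rf | π * z = π ^ (i + 1) * c} := fun x => ⟨G x, hGmem x⟩ with hFset
  refine ⟨fun z => Quotient.liftOn' z Fset fun a b' hab => ?_, ⟨?_, ?_⟩, ?_⟩
  · apply Subtype.ext
    show G a = G b'
    exact hwd a b' ((Submodule.quotientRel_def _).mp hab)
  · -- injective
    intro z1 z2 hz
    obtain ⟨x, rfl⟩ := Ideal.Quotient.mk_surjective z1
    obtain ⟨y, rfl⟩ := Ideal.Quotient.mk_surjective z2
    have hxy : G x = G y := congrArg Subtype.val hz
    have h0 : π ^ (b - 1) * (x - y) = 0 := by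
      have : π ^ (b - 1) * x + π ^ i * c = π ^ (b - 1) * y + π ^ i * c := hxy
      have h' : π ^ (b - 1) * x = π ^ (b - 1) * y := by linear_combination this
      linear_combination h'
    obtain ⟨t, ht⟩ := key2 _ h0
    rw [Ideal.Quotient.eq]
    exact Ideal.mem_span_singleton.mpr ⟨t, ht⟩
  · -- surjective
    rintro ⟨z, hz⟩
    have hz' : π * (z - π ^ i * c) = 0 := by
      have : π * z = π ^ (i + 1) * c := hz
      linear_combination this - e2 * c
    obtain ⟨t, ht⟩ := key1 _ hz'
    refine ⟨Ideal.Quotient.mk _ t, ?_⟩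
    apply Subtype.ext
    show G t = z
    rw [hG]
    simp only []
    linear_combination -ht
  · intro x
    rfl
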